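/- arXiv:2208.14723 — 4 statements merged into one kernel-verified Lean document; each statement's English description precedes it below -/
import Mathlib

section
/- If mode M₁ is derived from quasimode M̃₁ and mode M₂ is derived from quasimode M̃₂ (for Boolean P systems Π₁, Π₂ and their union Π = Π₁ ∪ Π₂), then the mode derived from the quasimode M̃₁ ⊍ M̃₂ equals the product mode M₁ × M₂; that is, for every configuration W, (M̃₁ ⊍ M̃₂) ∩ Appl(Π, W) = (M̃₁ ∩ Appl(Π, W)) ⊍ (M̃₂ ∩ Appl(Π, W)). -/
attribute [local instance] Classical.propDecidable

structure PRule (α : Type*) where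
  lhs : Set α
  rhs : Set α
  guard : Set α → Prop

def applicable {α : Type*} (r : PRule α) (W : Set α) : Prop :=
  r.lhs ⊆ W ∧ r.guard W

def applyRules {α : Type*} (S : Set (PRule α)) (W : Set α) : Set α :=
  (W \ ⋃ r ∈ S, r.lhs) ∪ ⋃ r ∈ S, r.rhs

def Appl {α : Type*} (R : Set (PRule α)) (W : Set α) : Set (Set (PRule α)) :=
  {S | S ⊆ R ∧ ∀ r ∈ S, applicable r W}

def uprod {α : Type*} (A B : Set (Set α)) : Set (Set α) :=
  {s | ∃ a ∈ A, ∃ b ∈ B, s = a ∪ b}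

/- Appl(Π, W) is downward closed and closed under unions, so a ∪ b lies in it exactly when
a and b do; hence intersecting with Appl(Π, W) commutes with ⊍. -/

theorem union_mem_Appl_iff {α : Type*} {R : Set (PRule α)} {W : Set α} {a b : Set (PRule α)} :
    a ∪ b ∈ Appl R W ↔ a ∈ Appl R W ∧ b ∈ Appl R W := by
  simp only [Appl, Set.mem_ofPred_eq, Set.union_subset_iff, Set.mem_union, or_imp, forall_and]
  tauto

theorem uprod_inter_of_union_mem_iff {α : Type*} {A B T : Set (Set α)}
    (hT : ∀ a b, a ∪ b ∈ T ↔ a ∈ T ∧ b ∈ T) :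
    uprod A B ∩ T = uprod (A ∩ T) (B ∩ T) := by
  ext s
  constructor
  · rintro ⟨⟨a, ha, b, hb, rfl⟩, hab⟩
    obtain ⟨haT, hbT⟩ := (hT a b).1 hab
    exact ⟨a, ⟨ha, haT⟩, b, ⟨hb, hbT⟩, rfl⟩
  · rintro ⟨a, ⟨ha, haT⟩, b, ⟨hb, hbT⟩, rfl⟩
    exact ⟨⟨a, ha, b, hb, rfl⟩, (hT a b).2 ⟨haT, hbT⟩⟩

theorem stmt3_general {α : Type*} (R₁ R₂ : Set (PRule α))
    (M₁ M₂ : Set (Set (PRule α)))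
    (W : Set α) :
    uprod M₁ M₂ ∩ Appl (R₁ ∪ R₂) W
      = uprod (M₁ ∩ Appl (R₁ ∪ R₂) W) (M₂ ∩ Appl (R₁ ∪ R₂) W) :=
  uprod_inter_of_union_mem_iff fun _ _ => union_mem_Appl_iff

theorem stmt3 {α : Type*} (R₁ R₂ : Set (PRule α))
    (M₁ M₂ : Set (Set (PRule α)))
    (hM₁ : ∀ S ∈ M₁, S ⊆ R₁) (hM₂ : ∀ S ∈ M₂, S ⊆ R₂)
    (W : Set α) :
    uprod M₁ M₂ ∩ Appl (R₁ ∪ R₂) W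
      = uprod (M₁ ∩ Appl (R₁ ∪ R₂) W) (M₂ ∩ Appl (R₁ ∪ R₂) W) :=
  stmt3_general R₁ R₂ M₁ M₂ W
end

section
/- Let F : (X → Bool) → (X → Bool) be a Boolean network over a finite variable set X, and let Π(F) be the Boolean P system over alphabet X whose rules are, for each x ∈ X, the rules ∅ → {x} | f_x and {x} → ∅ | ¬f_x, where f_x(s) = F(s)(x). Then for any state s : X → Bool with corresponding set W = {x | s(x) = true} and any set of variables m ⊆ X updated synchronously, the set obtained by applying to W the set of rules ⋃_{x∈m} R_x restricted to its applicable members equals {x | s'(x) = true}, where s' is the state obtained from s by updating each x ∈ m to f_x(s) and leaving other variables unchanged. -/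
attribute [local instance] Classical.propDecidable

noncomputable def ind {X : Type*} (W : Set X) : X → Bool :=
  fun y => decide (y ∈ W)

noncomputable def insRule {X : Type*} (F : (X → Bool) → (X → Bool)) (x : X) : PRule X :=
  ⟨∅, {x}, fun W => F (ind W) x = true⟩

noncomputable def eraseRule {X : Type*} (F : (X → Bool) → (X → Bool)) (x : X) : PRule X :=
  ⟨{x}, ∅, fun W => ¬ (F (ind W) x = true)⟩

noncomputable def Rx {X : Type*} (F : (X → Bool) → (X → Bool)) (x : X) : Set (PRule X) :=
  {insRule F x, eraseRule F x}


/-! The rules of `Π(F)` applicable to `W` are the insertions `∅ → {x}` with `f_x(W)` and the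
erasures `{x} → ∅` with `x ∈ W` and `¬f_x(W)`; a variable of `m` is therefore removed exactly when
`f_x(W)` fails and added exactly when it holds, which is the synchronous update. -/

section

variable {X : Type*} (F : (X → Bool) → (X → Bool)) (m W : Set X)

lemma ind_setOf (s : X → Bool) : ind {x | s x = true} = s := by
  funext y
  simp [ind]

lemma applicable_insRule_iff {x : X} : applicable (insRule F x) W ↔ F (ind W) x = true := by
  simp [applicable, insRule]

lemma applicable_eraseRule_iff {x : X} :
    applicable (eraseRule F x) W ↔ x ∈ W ∧ F (ind W) x = false := by
  simp [applicable, eraseRule]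

lemma applicable_Rx_eq :
    {r ∈ ⋃ x ∈ m, Rx F x | applicable r W} =
      insRule F '' {x ∈ m | F (ind W) x = true} ∪ eraseRule F '' {x ∈ m ∩ W | F (ind W) x = false} := by
  ext r
  simp only [Rx, Set.mem_sep_iff, Set.mem_iUnion, Set.mem_insert_iff, Set.mem_singleton_iff,
    Set.mem_union, Set.mem_image, Set.mem_inter_iff, exists_prop]
  constructor
  · rintro ⟨⟨x, hx, rfl | rfl⟩, happ⟩
    · exact Or.inl ⟨x, ⟨hx, (applicable_insRule_iff F W).1 happ⟩, rfl⟩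
    · obtain ⟨hxW, hf⟩ := (applicable_eraseRule_iff F W).1 happ
      exact Or.inr ⟨x, ⟨⟨hx, hxW⟩, hf⟩, rfl⟩
  · rintro (⟨x, ⟨hx, hf⟩, rfl⟩ | ⟨x, ⟨⟨hx, hxW⟩, hf⟩, rfl⟩)
    · exact ⟨⟨x, hx, Or.inl rfl⟩, (applicable_insRule_iff F W).2 hf⟩
    · exact ⟨⟨x, hx, Or.inr rfl⟩, (applicable_eraseRule_iff F W).2 ⟨hxW, hf⟩⟩

lemma applyRules_applicable_Rx :
    applyRules {r ∈ ⋃ x ∈ m, Rx F x | applicable r W} W =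
      {x | (if x ∈ m then F (ind W) x else ind W x) = true} := by
  rw [applyRules, applicable_Rx_eq, Set.biUnion_union, Set.biUnion_union,
    Set.biUnion_image, Set.biUnion_image, Set.biUnion_image, Set.biUnion_image]
  ext y
  by_cases hy : y ∈ m <;> cases hf : F (ind W) y <;> simp [insRule, eraseRule, ind, hy, hf]

end

theorem stmt5_general {X : Type*} (F : (X → Bool) → (X → Bool))
    (s : X → Bool) (m : Set X) :
    applyRules {r ∈ ⋃ x ∈ m, Rx F x | applicable r {x | s x = true}} {x | s x = true}
      = {x | (if x ∈ m then F s x else s x) = true} := by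
  rw [applyRules_applicable_Rx, ind_setOf]

theorem stmt5 {X : Type*} [Fintype X] (F : (X → Bool) → (X → Bool))
    (s : X → Bool) (m : Set X) :
    applyRules {r ∈ ⋃ x ∈ m, Rx F x | applicable r {x | s x = true}} {x | s x = true}
      = {x | (if x ∈ m then F s x else s x) = true} :=
  stmt5_general F s m
end

section
/- Any reaction a = (R_a, I_a, P_a) of a reaction system is simulated exactly by the Boolean P system rule ∅ → P_a | φ_a together with degradation rules: for every W ⊆ S, the result of applying to W all applicable rules among { ∅ → P_a | φ_a : a ∈ A } ∪ { {x} → ∅ | ⊤ : x ∈ S } equals res_A(W) = ⋃ { P_a | a ∈ A, R_a ⊆ W, I_a ∩ W = ∅ }, where φ_a(W) = (R_a ⊆ W ∧ I_a ∩ W = ∅). -/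
attribute [local instance] Classical.propDecidable

structure Reaction (σ : Type*) where
  Ra : Set σ
  Ia : Set σ
  Pa : Set σ

def enabled {σ : Type*} (a : Reaction σ) (W : Set σ) : Prop :=
  a.Ra ⊆ W ∧ a.Ia ∩ W = ∅

def res {σ : Type*} (A : Set (Reaction σ)) (W : Set σ) : Set σ :=
  ⋃ a ∈ {a ∈ A | enabled a W}, a.Pa

def reactionRule {σ : Type*} (a : Reaction σ) : PRule σ :=
  ⟨∅, a.Pa, fun W => a.Ra ⊆ W ∧ a.Ia ∩ W = ∅⟩

def degRule {σ : Type*} (x : σ) : PRule σ :=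
  ⟨{x}, ∅, fun _ => True⟩

/-! The applicable rules are the reaction rules of the reactions enabled on `W` together with one
degradation rule `{x} → ∅` for each `x ∈ W`. The degradation rules erase all of `W` and produce
nothing, while the reaction rules consume nothing, so what remains is exactly the union of the
products of the enabled reactions. -/

theorem applyRules_eq_iUnion_rhs {α : Type*} {S : Set (PRule α)} {W : Set α}
    (hW : W ⊆ ⋃ r ∈ S, r.lhs) : applyRules S W = ⋃ r ∈ S, r.rhs := by
  rw [applyRules, Set.sdiff_eq_empty.mpr hW, Set.empty_union]

section

variable {σ : Type*} (A : Set (Reaction σ)) (W : Set σ)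

theorem sep_applicable_eq_image_union_image :
    {r ∈ (reactionRule '' A) ∪ Set.range degRule | applicable r W}
      = reactionRule '' {a ∈ A | enabled a W} ∪ degRule '' W := by
  ext r
  simp only [Set.mem_sep_iff, Set.mem_union, Set.mem_image, Set.mem_range, or_and_right]
  apply or_congr
  · constructor
    · rintro ⟨⟨a, ha, rfl⟩, hr⟩
      exact ⟨a, ⟨ha, hr.2⟩, rfl⟩
    · rintro ⟨a, ⟨ha, hen⟩, rfl⟩
      exact ⟨⟨a, ha, rfl⟩, Set.empty_subset W, hen⟩
  · constructor
    · rintro ⟨⟨x, rfl⟩, hx, -⟩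
      exact ⟨x, Set.singleton_subset_iff.mp hx, rfl⟩
    · rintro ⟨x, hx, rfl⟩
      exact ⟨⟨x, rfl⟩, Set.singleton_subset_iff.mpr hx, trivial⟩

theorem subset_iUnion_lhs_applicable :
    W ⊆ ⋃ r ∈ {r ∈ (reactionRule '' A) ∪ Set.range degRule | applicable r W}, r.lhs := by
  rw [sep_applicable_eq_image_union_image]
  exact fun x hx => Set.mem_biUnion (Or.inr (Set.mem_image_of_mem degRule hx)) rfl

theorem iUnion_rhs_applicable_eq_res :
    ⋃ r ∈ {r ∈ (reactionRule '' A) ∪ Set.range degRule | applicable r W}, r.rhs = res A W := by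
  rw [sep_applicable_eq_image_union_image, Set.biUnion_union, Set.biUnion_image, Set.biUnion_image]
  simp only [reactionRule, degRule, Set.iUnion_empty, Set.union_empty]
  rfl

end

theorem stmt9 {σ : Type*} (A : Set (Reaction σ)) (W : Set σ) :
    applyRules
      {r ∈ (reactionRule '' A) ∪ Set.range (degRule (σ := σ)) | applicable r W} W
      = res A W := by
  rw [applyRules_eq_iUnion_rhs (subset_iUnion_lhs_applicable A W),
    iUnion_rhs_applicable_eq_res]
end

section
/- Suppose Π₁ = (V₁, R₁) and Π₂ = (V₂, R₂) are Boolean P systems with disjoint alphabets V₁ ∩ V₂ = ∅, and additionally each rule of Rᵢ mentions only symbols of Vᵢ (left-hand side, right-hand side, and the guard depends only on the restriction of the configuration to Vᵢ). Then for any one-step transition W → W' of Π₁ ∪ Π₂ under the product mode M₁ × M₂, the projections satisfy: W ∩ V₁ → W' ∩ V₁ is a one-step transition of Π₁ under M₁, and W ∩ V₂ → W' ∩ V₂ is a one-step transition of Π₂ under M₂. -/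
attribute [local instance] Classical.propDecidable

/-!
A rule of `Π₂` neither consumes nor produces symbols of `V₁`, so on `V₁` a product step acts
exactly as its `Π₁`-component, and locality of `M₁` lets that component be read in `M₁ (W ∩ V₁)`.
Swapping the factors of the product mode gives the statement for `V₂`.
-/

section

variable {α : Type*}

theorem uprod_comm (A B : Set (Set α)) : uprod A B = uprod B A := by
  ext s
  constructor <;>
  · rintro ⟨a, ha, b, hb, rfl⟩
    exact ⟨b, hb, a, ha, Set.union_comm a b⟩

theorem applyRules_union_inter {V : Set α} {S₁ S₂ : Set (PRule α)}
    (h₁ : ∀ r ∈ S₁, r.rhs ⊆ V) (h₂ : ∀ r ∈ S₂, Disjoint r.lhs V ∧ Disjoint r.rhs V)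
    (W : Set α) :
    applyRules (S₁ ∪ S₂) W ∩ V = applyRules S₁ (W ∩ V) := by
  ext x
  simp only [applyRules, Set.mem_inter_iff, Set.mem_union, Set.mem_sdiff, Set.mem_iUnion,
    exists_prop, not_exists, not_and]
  have lhs₂ : ∀ r ∈ S₂, x ∈ V → x ∉ r.lhs := fun r hr hx hl =>
    Set.disjoint_left.mp (h₂ r hr).1 hl hx
  have rhs₂ : ∀ r ∈ S₂, x ∈ V → x ∉ r.rhs := fun r hr hx hl =>
    Set.disjoint_left.mp (h₂ r hr).2 hl hx
  constructor
  · rintro ⟨⟨hW, hnot⟩ | ⟨r, hr₁ | hr₂, hx⟩, hV⟩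
    · exact Or.inl ⟨⟨hW, hV⟩, fun r hr => hnot r (Or.inl hr)⟩
    · exact Or.inr ⟨r, hr₁, hx⟩
    · exact absurd hx (rhs₂ r hr₂ hV)
  · rintro (⟨⟨hW, hV⟩, hnot⟩ | ⟨r, hr, hx⟩)
    · exact ⟨Or.inl ⟨hW, fun r hr => hr.elim (hnot r) (fun hr₂ => lhs₂ r hr₂ hV)⟩, hV⟩
    · exact ⟨Or.inr ⟨r, Or.inl hr, hx⟩, h₁ r hr hx⟩

theorem exists_step_inter_left {V₁ V₂ : Set α} {R₁ R₂ : Set (PRule α)}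
    {M₁ M₂ : Set α → Set (Set (PRule α))} {W W' : Set α} (hV : Disjoint V₁ V₂)
    (hR₁ : ∀ r ∈ R₁, r.rhs ⊆ V₁) (hR₂ : ∀ r ∈ R₂, r.lhs ⊆ V₂ ∧ r.rhs ⊆ V₂)
    (hM₁ : ∀ W, M₁ W ⊆ Appl R₁ W) (hM₂ : ∀ W, M₂ W ⊆ Appl R₂ W)
    (hM₁loc : ∀ W, M₁ W = M₁ (W ∩ V₁))
    (hstep : ∃ S ∈ uprod (M₁ W) (M₂ W), W' = applyRules S W) :
    ∃ S₁ ∈ M₁ (W ∩ V₁), W' ∩ V₁ = applyRules S₁ (W ∩ V₁) := by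
  obtain ⟨_, ⟨S₁, hS₁, S₂, hS₂, rfl⟩, rfl⟩ := hstep
  refine ⟨S₁, hM₁loc W ▸ hS₁, applyRules_union_inter (fun r hr => hR₁ r ((hM₁ W hS₁).1 hr))
    (fun r hr => ?_) W⟩
  obtain ⟨hl, hr⟩ := hR₂ r ((hM₂ W hS₂).1 hr)
  exact ⟨hV.symm.mono_left hl, hV.symm.mono_left hr⟩

end

theorem stmt13 {α : Type*} (V₁ V₂ : Set α) (R₁ R₂ : Set (PRule α))
    (hV : V₁ ∩ V₂ = ∅)
    (hR₁ : ∀ r ∈ R₁, r.lhs ⊆ V₁ ∧ r.rhs ⊆ V₁ ∧ ∀ W : Set α, (r.guard W ↔ r.guard (W ∩ V₁)))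
    (hR₂ : ∀ r ∈ R₂, r.lhs ⊆ V₂ ∧ r.rhs ⊆ V₂ ∧ ∀ W : Set α, (r.guard W ↔ r.guard (W ∩ V₂)))
    (M₁ M₂ : Set α → Set (Set (PRule α)))
    (hM₁ : ∀ W : Set α, M₁ W ⊆ Appl R₁ W) (hM₂ : ∀ W : Set α, M₂ W ⊆ Appl R₂ W)
    (hM₁loc : ∀ W : Set α, M₁ W = M₁ (W ∩ V₁)) (hM₂loc : ∀ W : Set α, M₂ W = M₂ (W ∩ V₂))
    (W W' : Set α)
    (hstep : ∃ S ∈ uprod (M₁ W) (M₂ W), W' = applyRules S W) :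
    (∃ S₁ ∈ M₁ (W ∩ V₁), W' ∩ V₁ = applyRules S₁ (W ∩ V₁)) ∧
    (∃ S₂ ∈ M₂ (W ∩ V₂), W' ∩ V₂ = applyRules S₂ (W ∩ V₂)) := by
  have hV' : Disjoint V₁ V₂ := Set.disjoint_iff_inter_eq_empty.mpr hV
  refine ⟨exists_step_inter_left hV' (fun r hr => (hR₁ r hr).2.1)
      (fun r hr => ⟨(hR₂ r hr).1, (hR₂ r hr).2.1⟩) hM₁ hM₂ hM₁loc hstep,
    exists_step_inter_left hV'.symm (fun r hr => (hR₂ r hr).2.1)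
      (fun r hr => ⟨(hR₁ r hr).1, (hR₁ r hr).2.1⟩) hM₂ hM₁ hM₂loc ?_⟩
  rwa [uprod_comm]
end
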